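/- For every δ ∈ (0,1] there exists a constant C = C(δ) > 0 such that for all t ≥ 1, every nonzero integer k, and all ξ, η ∈ ℝ: ⟨t⟩(⟨t⟩ + |(k,ξ)|)·⟨t − ξ/k⟩² / (⟨ξ/k⟩²·⟨ξ⟩/|k|) ≤ C · ⟨t⟩(⟨t⟩ + |(k,η)|)·⟨t − η/k⟩² / (⟨η/k⟩²·⟨η⟩/|k|) · exp( δ · ( min(⟨ξ−η⟩, ⟨k,η⟩) )^{1/2} ). -/

import Mathlib

/-- Japanese bracket `⟨a⟩ = (1 + a²)^{1/2}` of a real number. -/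
noncomputable def jb (a : ℝ) : ℝ := Real.sqrt (1 + a ^ 2)

/-- Double Japanese bracket `⟨k,η⟩ = (1 + k² + η²)^{1/2}`. -/
noncomputable def jb2 (k : ℤ) (η : ℝ) : ℝ := Real.sqrt (1 + (k : ℝ) ^ 2 + η ^ 2)

lemma jb_pos (a : ℝ) : 0 < jb a := Real.sqrt_pos.mpr (by positivity)

lemma one_le_jb (a : ℝ) : 1 ≤ jb a := by
  rw [jb]
  calc (1:ℝ) = Real.sqrt 1 := Real.sqrt_one.symm
    _ ≤ _ := Real.sqrt_le_sqrt (by nlinarith [sq_nonneg a])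

lemma abs_le_jb (a : ℝ) : |a| ≤ jb a := by
  rw [jb, ← Real.sqrt_sq_eq_abs]
  exact Real.sqrt_le_sqrt (by linarith)

lemma jb_mono {a b : ℝ} (h : a ^ 2 ≤ b ^ 2) : jb a ≤ jb b :=
  Real.sqrt_le_sqrt (by linarith)

lemma jb_sub_le (a b : ℝ) : jb (a - b) ≤ 2 * jb a * jb b := by
  have ha : (jb a) ^ 2 = 1 + a ^ 2 := Real.sq_sqrt (by positivity)
  have hb : (jb b) ^ 2 = 1 + b ^ 2 := Real.sq_sqrt (by positivity)
  have h0 : 0 ≤ 2 * jb a * jb b := by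
    have := (jb_pos a).le; have := (jb_pos b).le; positivity
  have key : 1 + (a - b) ^ 2 ≤ (2 * jb a * jb b) ^ 2 := by
    nlinarith [sq_nonneg (a*b), sq_nonneg (a+b), sq_nonneg (a-b)]
  calc jb (a - b) = Real.sqrt (1 + (a - b) ^ 2) := rfl
    _ ≤ Real.sqrt ((2 * jb a * jb b) ^ 2) := Real.sqrt_le_sqrt key
    _ = 2 * jb a * jb b := Real.sqrt_sq h0

lemma jb_le_jb2 (k : ℤ) (η : ℝ) : jb η ≤ jb2 k η :=
  Real.sqrt_le_sqrt (by nlinarith [sq_nonneg ((k:ℝ))])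

lemma one_le_jb2 (k : ℤ) (η : ℝ) : 1 ≤ jb2 k η :=
  le_trans (one_le_jb η) (jb_le_jb2 k η)

lemma abs_le_sqrt' (x y : ℝ) : |y| ≤ Real.sqrt (x ^ 2 + y ^ 2) := by
  rw [← Real.sqrt_sq_eq_abs]
  exact Real.sqrt_le_sqrt (by nlinarith [sq_nonneg x])

lemma abs_le_sqrt1 (x y : ℝ) : |x| ≤ Real.sqrt (x ^ 2 + y ^ 2) := by
  rw [← Real.sqrt_sq_eq_abs]
  exact Real.sqrt_le_sqrt (by nlinarith [sq_nonneg y])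

lemma sqrt_tri (x ξ η : ℝ) :
    Real.sqrt (x ^ 2 + ξ ^ 2) ≤ Real.sqrt (x ^ 2 + η ^ 2) + |ξ - η| := by
  have h1 : |η| ≤ Real.sqrt (x ^ 2 + η ^ 2) := abs_le_sqrt' x η
  have h0 : 0 ≤ Real.sqrt (x ^ 2 + η ^ 2) := Real.sqrt_nonneg _
  have hs : (Real.sqrt (x ^ 2 + η ^ 2)) ^ 2 = x ^ 2 + η ^ 2 := Real.sq_sqrt (by positivity)
  have hm : η * (ξ - η) ≤ Real.sqrt (x ^ 2 + η ^ 2) * |ξ - η| := by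
    calc η * (ξ - η) ≤ |η * (ξ - η)| := le_abs_self _
      _ = |η| * |ξ - η| := abs_mul _ _
      _ ≤ _ := mul_le_mul_of_nonneg_right h1 (abs_nonneg _)
  have h2 : x ^ 2 + ξ ^ 2 ≤ (Real.sqrt (x ^ 2 + η ^ 2) + |ξ - η|) ^ 2 := by
    nlinarith [sq_abs (ξ - η), abs_nonneg (ξ - η)]
  calc Real.sqrt (x ^ 2 + ξ ^ 2)
      ≤ Real.sqrt ((Real.sqrt (x ^ 2 + η ^ 2) + |ξ - η|) ^ 2) := Real.sqrt_le_sqrt h2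
    _ = _ := Real.sqrt_sq (by positivity)

lemma sqrt_le_abs_add (x ξ : ℝ) : Real.sqrt (x ^ 2 + ξ ^ 2) ≤ |x| + |ξ| := by
  have h2 : x ^ 2 + ξ ^ 2 ≤ (|x| + |ξ|) ^ 2 := by
    nlinarith [abs_nonneg x, abs_nonneg ξ, sq_abs x, sq_abs ξ]
  calc Real.sqrt (x ^ 2 + ξ ^ 2) ≤ Real.sqrt ((|x| + |ξ|) ^ 2) := Real.sqrt_le_sqrt h2
    _ = _ := Real.sqrt_sq (by positivity)

lemma case1_bound {a s s' b b' c c' e e' u : ℝ}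
    (ha : 0 ≤ a) (hs' : 0 ≤ a + s') (hb : 0 ≤ b) (hb' : 0 ≤ b') (hc : 0 ≤ c)
    (hc' : 0 ≤ c') (he : 0 ≤ e) (he' : 0 ≤ e') (hu : 0 ≤ u)
    (h1 : a + s ≤ 2 * u * (a + s')) (h2 : b ≤ 2 * b' * u)
    (h3 : c' ≤ 2 * c * u) (h4 : e' ≤ 2 * e * u) :
    a * (a + s) * b ^ 2 * (c' ^ 2 * e') ≤ 64 * u ^ 6 * (a * (a + s') * b' ^ 2) * (c ^ 2 * e) := by
  have A1 : a * (a + s) ≤ a * (2 * u * (a + s')) := mul_le_mul_of_nonneg_left h1 ha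
  have A2 : b ^ 2 ≤ (2 * b' * u) ^ 2 := pow_le_pow_left₀ hb h2 2
  have hA : 0 ≤ a * (2 * u * (a + s')) := by positivity
  have A3 : a * (a + s) * b ^ 2 ≤ a * (2 * u * (a + s')) * (2 * b' * u) ^ 2 :=
    mul_le_mul A1 A2 (by positivity) hA
  have A4 : c' ^ 2 * e' ≤ (2 * c * u) ^ 2 * (2 * e * u) :=
    mul_le_mul (pow_le_pow_left₀ hc' h3 2) h4 he' (by positivity)
  calc a * (a + s) * b ^ 2 * (c' ^ 2 * e')
      ≤ a * (2 * u * (a + s')) * (2 * b' * u) ^ 2 * ((2 * c * u) ^ 2 * (2 * e * u)) :=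
        mul_le_mul A3 A4 (by positivity) (by positivity)
    _ = 64 * u ^ 6 * (a * (a + s') * b' ^ 2) * (c ^ 2 * e) := by ring

lemma case2_bound {a s s' b b' c c' e e' v : ℝ}
    (ha : 0 ≤ a) (hs' : 0 ≤ a + s') (hb : 0 ≤ b) (hb' : 0 ≤ b') (hc : 0 ≤ c)
    (hc' : 0 ≤ c') (he : 0 ≤ e) (he' : 0 ≤ e') (hv : 1 ≤ v)
    (g1 : a + s ≤ 2 * e * (a + s')) (g2 : b ≤ 4 * b' * c * v)
    (g3 : c' ≤ v) (g4 : e' ≤ v) :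
    a * (a + s) * b ^ 2 * (c' ^ 2 * e') ≤ 64 * v ^ 6 * (a * (a + s') * b' ^ 2) * (c ^ 2 * e) := by
  have hv0 : 0 ≤ v := by linarith
  have A1 : a * (a + s) ≤ a * (2 * e * (a + s')) := mul_le_mul_of_nonneg_left g1 ha
  have A2 : b ^ 2 ≤ (4 * b' * c * v) ^ 2 := pow_le_pow_left₀ hb g2 2
  have A3 : a * (a + s) * b ^ 2 ≤ a * (2 * e * (a + s')) * (4 * b' * c * v) ^ 2 :=
    mul_le_mul A1 A2 (by positivity) (by positivity)
  have A4 : c' ^ 2 * e' ≤ v ^ 2 * v :=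
    mul_le_mul (pow_le_pow_left₀ hc' g3 2) g4 he' (by positivity)
  have A5 : a * (a + s) * b ^ 2 * (c' ^ 2 * e')
      ≤ a * (2 * e * (a + s')) * (4 * b' * c * v) ^ 2 * (v ^ 2 * v) :=
    mul_le_mul A3 A4 (by positivity) (by positivity)
  have hN : 0 ≤ a * (a + s') * b' ^ 2 * (c ^ 2 * e) := by positivity
  have key : 32 * v ^ 5 * (a * (a + s') * b' ^ 2 * (c ^ 2 * e))
      ≤ 64 * v ^ 6 * (a * (a + s') * b' ^ 2 * (c ^ 2 * e)) := by
    nlinarith [mul_nonneg (mul_nonneg (pow_nonneg hv0 5) hN) (by linarith : (0:ℝ) ≤ 2 * v - 1)]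
  calc a * (a + s) * b ^ 2 * (c' ^ 2 * e')
      ≤ a * (2 * e * (a + s')) * (4 * b' * c * v) ^ 2 * (v ^ 2 * v) := A5
    _ = 32 * v ^ 5 * (a * (a + s') * b' ^ 2 * (c ^ 2 * e)) := by ring
    _ ≤ 64 * v ^ 6 * (a * (a + s') * b' ^ 2 * (c ^ 2 * e)) := key
    _ = 64 * v ^ 6 * (a * (a + s') * b' ^ 2) * (c ^ 2 * e) := by ring

lemma g1_aux {a kk x s' : ℝ} (ha : 1 ≤ a) (hks : kk ≤ s') (hx : 0 ≤ x) (hs' : 0 ≤ s') :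
    a + kk + x ≤ (1 + x) * (a + s') := by nlinarith

set_option maxHeartbeats 1000000 in
theorem stmt12 (δ : ℝ) (hδ : δ ∈ Set.Ioc (0 : ℝ) 1) :
    ∃ C : ℝ, 0 < C ∧ ∀ (t : ℝ), 1 ≤ t → ∀ (k : ℤ), k ≠ 0 → ∀ ξ η : ℝ,
    jb t * (jb t + Real.sqrt ((k : ℝ) ^ 2 + ξ ^ 2)) * (jb (t - ξ / (k : ℝ))) ^ 2 /
        ((jb (ξ / (k : ℝ))) ^ 2 * jb ξ / |(k : ℝ)|) ≤
      C * (jb t * (jb t + Real.sqrt ((k : ℝ) ^ 2 + η ^ 2)) * (jb (t - η / (k : ℝ))) ^ 2 /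
            ((jb (η / (k : ℝ))) ^ 2 * jb η / |(k : ℝ)|)) *
        Real.exp (δ * Real.sqrt (min (jb (ξ - η)) (jb2 k η))) := by
  obtain ⟨hδ0, hδ1⟩ := hδ
  refine ⟨64 * (12 / δ) ^ 12, by positivity, ?_⟩
  intro t ht k hk ξ η
  have hk1 : (1:ℤ) ≤ |k| := Int.one_le_abs hk
  have hK : (1:ℝ) ≤ |(k:ℝ)| := by
    rw [← Int.cast_abs]; exact_mod_cast hk1
  have hK0 : (0:ℝ) < |(k:ℝ)| := by linarith
  have hk2 : (1:ℝ) ≤ (k:ℝ) ^ 2 := by nlinarith [sq_abs ((k:ℝ))]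
  -- abbreviations
  set a := jb t with ha_def
  set S := Real.sqrt ((k:ℝ) ^ 2 + ξ ^ 2) with hS_def
  set S' := Real.sqrt ((k:ℝ) ^ 2 + η ^ 2) with hS'_def
  set b := jb (t - ξ / (k:ℝ)) with hb_def
  set b' := jb (t - η / (k:ℝ)) with hb'_def
  set c := jb (ξ / (k:ℝ)) with hc_def
  set c' := jb (η / (k:ℝ)) with hc'_def
  set e := jb ξ with he_def
  set e' := jb η with he'_def
  set u := jb (ξ - η) with hu_def
  set v := jb2 k η with hv_def
  set m := min u v with hm_def
  have ha1 : 1 ≤ a := one_le_jb t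
  have ha0 : 0 < a := jb_pos t
  have hb0 : 0 < b := jb_pos _
  have hb'0 : 0 < b' := jb_pos _
  have hc0 : 0 < c := jb_pos _
  have hc'0 : 0 < c' := jb_pos _
  have he0 : 0 < e := jb_pos _
  have he'0 : 0 < e' := jb_pos _
  have hu1 : 1 ≤ u := one_le_jb _
  have hv1 : 1 ≤ v := one_le_jb2 _ _
  have hm1 : 1 ≤ m := le_min hu1 hv1
  have hm0 : 0 ≤ m := by linarith
  have hS0 : 0 ≤ S := Real.sqrt_nonneg _
  have hS'0 : 0 ≤ S' := Real.sqrt_nonneg _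
  have hdk : jb ((ξ - η) / (k:ℝ)) ≤ u := by
    apply jb_mono
    rw [div_pow]
    exact div_le_self (sq_nonneg _) hk2
  -- case 1 hypotheses
  have hSS' : S ≤ S' + |ξ - η| := sqrt_tri _ _ _
  have habsu : |ξ - η| ≤ u := abs_le_jb _
  have h1 : a + S ≤ 2 * u * (a + S') := by
    nlinarith [mul_nonneg (by linarith : (0:ℝ) ≤ a + S' - 1) (by linarith : (0:ℝ) ≤ 2 * u - 1),
      hSS', habsu]
  have hsplit : t - ξ / (k:ℝ) = (t - η / (k:ℝ)) - (ξ - η) / (k:ℝ) := by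
    field_simp
    ring
  have h2 : b ≤ 2 * b' * u := by
    calc b = jb ((t - η / (k:ℝ)) - (ξ - η) / (k:ℝ)) := by rw [hb_def, hsplit]
      _ ≤ 2 * b' * jb ((ξ - η) / (k:ℝ)) := jb_sub_le _ _
      _ ≤ 2 * b' * u := mul_le_mul_of_nonneg_left hdk (by linarith)
  have hsplit2 : η / (k:ℝ) = ξ / (k:ℝ) - (ξ - η) / (k:ℝ) := by ring
  have h3 : c' ≤ 2 * c * u := by
    calc c' = jb (ξ / (k:ℝ) - (ξ - η) / (k:ℝ)) := by rw [hc'_def, hsplit2]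
      _ ≤ 2 * c * jb ((ξ - η) / (k:ℝ)) := jb_sub_le _ _
      _ ≤ 2 * c * u := mul_le_mul_of_nonneg_left hdk (by linarith)
  have h4 : e' ≤ 2 * e * u := by
    calc e' = jb (ξ - (ξ - η)) := by rw [he'_def]; ring_nf
      _ ≤ 2 * e * u := jb_sub_le _ _
  -- case 2 hypotheses
  have hSk : S ≤ |(k:ℝ)| + |ξ| := sqrt_le_abs_add _ _
  have hS'k : |(k:ℝ)| ≤ S' := abs_le_sqrt1 _ _
  have heξ : |ξ| ≤ e := abs_le_jb _
  have he1 : 1 ≤ e := one_le_jb ξ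
  have g1 : a + S ≤ 2 * e * (a + S') := by
    have A : a + |(k:ℝ)| + |ξ| ≤ (1 + |ξ|) * (a + S') :=
      g1_aux ha1 hS'k (abs_nonneg ξ) hS'0
    have B : (1 + |ξ|) * (a + S') ≤ 2 * e * (a + S') :=
      mul_le_mul_of_nonneg_right (by linarith) (by linarith)
    linarith [hSk]
  have hc'e' : c' ≤ e' := by
    apply jb_mono
    rw [div_pow]
    exact div_le_self (sq_nonneg _) hk2
  have he'v : e' ≤ v := jb_le_jb2 _ _
  have hc'v : c' ≤ v := le_trans hc'e' he'v
  have hdk2 : jb ((ξ - η) / (k:ℝ)) ≤ 2 * c * c' := by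
    have : (ξ - η) / (k:ℝ) = ξ / (k:ℝ) - η / (k:ℝ) := by ring
    rw [this]
    exact jb_sub_le _ _
  have g2 : b ≤ 4 * b' * c * v := by
    calc b = jb ((t - η / (k:ℝ)) - (ξ - η) / (k:ℝ)) := by rw [hb_def, hsplit]
      _ ≤ 2 * b' * jb ((ξ - η) / (k:ℝ)) := jb_sub_le _ _
      _ ≤ 2 * b' * (2 * c * c') := mul_le_mul_of_nonneg_left hdk2 (by linarith)
      _ = 4 * b' * c * c' := by ring
      _ ≤ 4 * b' * c * v :=
          mul_le_mul_of_nonneg_left hc'v (mul_nonneg (mul_nonneg (by norm_num) hb'0.le) hc0.le)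
  -- combined numerator bound
  have Hnum : a * (a + S) * b ^ 2 * (c' ^ 2 * e')
      ≤ 64 * m ^ 6 * (a * (a + S') * b' ^ 2) * (c ^ 2 * e) := by
    rcases le_total u v with huv | hvu
    · rw [hm_def, min_eq_left huv]
      exact case1_bound ha0.le (by linarith) hb0.le hb'0.le hc0.le hc'0.le he0.le he'0.le
        (by linarith) h1 h2 h3 h4
    · rw [hm_def, min_eq_right hvu]
      exact case2_bound ha0.le (by linarith) hb0.le hb'0.le hc0.le hc'0.le he0.le he'0.le
        hv1 g1 g2 hc'v he'v
  -- ratio bound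
  have hD1 : 0 < c ^ 2 * e / |(k:ℝ)| := by positivity
  have hD2 : 0 < c' ^ 2 * e' / |(k:ℝ)| := by positivity
  have hmain : a * (a + S) * b ^ 2 / (c ^ 2 * e / |(k:ℝ)|)
      ≤ 64 * m ^ 6 * (a * (a + S') * b' ^ 2 / (c' ^ 2 * e' / |(k:ℝ)|)) := by
    rw [show 64 * m ^ 6 * (a * (a + S') * b' ^ 2 / (c' ^ 2 * e' / |(k:ℝ)|))
        = 64 * m ^ 6 * (a * (a + S') * b' ^ 2) / (c' ^ 2 * e' / |(k:ℝ)|) from by ring,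
      div_le_div_iff₀ hD1 hD2]
    calc a * (a + S) * b ^ 2 * (c' ^ 2 * e' / |(k:ℝ)|)
        = a * (a + S) * b ^ 2 * (c' ^ 2 * e') / |(k:ℝ)| := by ring
      _ ≤ 64 * m ^ 6 * (a * (a + S') * b' ^ 2) * (c ^ 2 * e) / |(k:ℝ)| :=
          (div_le_div_iff_of_pos_right hK0).mpr Hnum
      _ = 64 * m ^ 6 * (a * (a + S') * b' ^ 2) * (c ^ 2 * e / |(k:ℝ)|) := by ring
  -- exponential bound
  have hexp : m ^ 6 ≤ (12 / δ) ^ 12 * Real.exp (δ * Real.sqrt m) := by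
    set y := Real.sqrt m with hy_def
    have hy0 : 0 ≤ y := Real.sqrt_nonneg _
    have hy2 : y ^ 2 = m := Real.sq_sqrt hm0
    have hstep : δ * y / 12 ≤ Real.exp (δ * y / 12) := by
      have := Real.add_one_le_exp (δ * y / 12); linarith
    have hpow : (δ * y / 12) ^ 12 ≤ Real.exp (δ * y) := by
      calc (δ * y / 12) ^ 12 ≤ (Real.exp (δ * y / 12)) ^ 12 :=
            pow_le_pow_left₀ (by positivity) hstep 12
        _ = Real.exp (δ * y) := by
            rw [← Real.exp_nat_mul]
            congr 1
            push_cast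
            ring
    have hid : m ^ 6 = (12 / δ) ^ 12 * (δ * y / 12) ^ 12 := by
      rw [← mul_pow]
      have : 12 / δ * (δ * y / 12) = y := by field_simp
      rw [this, ← hy2]; ring
    rw [hid]
    exact mul_le_mul_of_nonneg_left hpow (by positivity)
  -- conclude
  have hR : 0 < a * (a + S') * b' ^ 2 / (c' ^ 2 * e' / |(k:ℝ)|) := by
    apply div_pos _ hD2
    have : 0 < a + S' := by linarith
    positivity
  calc a * (a + S) * b ^ 2 / (c ^ 2 * e / |(k:ℝ)|)
      ≤ 64 * m ^ 6 * (a * (a + S') * b' ^ 2 / (c' ^ 2 * e' / |(k:ℝ)|)) := hmain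
    _ ≤ 64 * ((12 / δ) ^ 12 * Real.exp (δ * Real.sqrt m))
        * (a * (a + S') * b' ^ 2 / (c' ^ 2 * e' / |(k:ℝ)|)) := by
        apply mul_le_mul_of_nonneg_right _ hR.le
        linarith [hexp]
    _ = 64 * (12 / δ) ^ 12 * (a * (a + S') * b' ^ 2 / (c' ^ 2 * e' / |(k:ℝ)|))
        * Real.exp (δ * Real.sqrt m) := by ring
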